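/- arXiv:1202.1331 — 11 statements merged into one kernel-verified Lean document; each statement's English description precedes it below -/
import Mathlib

section
/- If A is a finite subset of the nonnegative integers with vol(A) = n ≥ 1, then per(A) ≥ (-1 + √(1+8n))/2; in particular per(A) > √(2n) - 1/2. -/
open Finset

/-- Volume of a finite set of naturals: sum of its elements. -/
def vol (A : Finset ℕ) : ℕ := ∑ x ∈ A, x

/-- Boundary of a finite set: elements whose predecessor or successor is missing
(0 has no predecessor, so 0 is always in the boundary when present). -/
def bdry (A : Finset ℕ) : Finset ℕ :=
  A.filter (fun x => x = 0 ∨ x - 1 ∉ A ∨ x + 1 ∉ A)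

/-- Perimeter of a finite set: sum of its boundary elements. -/
def per (A : Finset ℕ) : ℕ := ∑ x ∈ bdry A, x

/-- Boundary of an arbitrary set of naturals. -/
def sBdry (S : Set ℕ) : Set ℕ := {x ∈ S | x = 0 ∨ x - 1 ∉ S ∨ x + 1 ∉ S}

/-- Perimeter of a set of naturals with finite boundary (finsum, 0 if infinite). -/
noncomputable def sPer (S : Set ℕ) : ℕ := ∑ᶠ x ∈ sBdry S, x

/-- P(n): minimal perimeter among finite subsets of ℕ with volume n. -/
noncomputable def Pmin (n : ℕ) : ℕ :=
  sInf {p | ∃ A : Finset ℕ, vol A = n ∧ per A = p}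

/-- Q(n): minimal perimeter of the complement among finite subsets of ℕ with volume n. -/
noncomputable def Qmin (n : ℕ) : ℕ :=
  sInf {p | ∃ A : Finset ℕ, vol A = n ∧ sPer ((↑A : Set ℕ)ᶜ) = p}

/-- f(n) = ⌈(-1 + √(1+8n))/2⌉. -/
noncomputable def fN (n : ℕ) : ℕ := (⌈(-1 + Real.sqrt (1 + 8 * n)) / 2⌉).toNat

/-- g(n) = f(n)(f(n)+1)/2 - n. -/
noncomputable def gN (n : ℕ) : ℕ := fN n * (fN n + 1) / 2 - n

lemma key (A : Finset ℕ) : 2 * vol A ≤ per A * (per A + 1) := by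
  induction A using Finset.strongInduction with
  | _ A ih =>
    rcases A.eq_empty_or_nonempty with rfl | hA
    · simp [vol, per, bdry]
    set m := A.max' hA with hm
    have hmA : m ∈ A := A.max'_mem hA
    have hmax : ∀ x ∈ A, x ≤ m := fun x hx => A.le_max' x hx
    have hmspec : Finset.Icc m m ⊆ A := by
      intro x hx
      simp only [Finset.mem_Icc] at hx
      have : x = m := le_antisymm hx.2 hx.1
      rw [this]; exact hmA
    have hex : ∃ a, Finset.Icc a m ⊆ A := ⟨m, hmspec⟩
    set a := Nat.find hex with haDef
    have ha : Finset.Icc a m ⊆ A := Nat.find_spec hex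
    have hmin : ∀ b < a, ¬ Finset.Icc b m ⊆ A := fun b hb => Nat.find_min hex hb
    have ham : a ≤ m := Nat.find_le hmspec
    have haA : a ∈ A := ha (Finset.mem_Icc.mpr ⟨le_refl a, ham⟩)
    -- the left end is a boundary point
    have h0 : a = 0 ∨ a - 1 ∉ A := by
      rcases Nat.eq_zero_or_pos a with h | h
      · exact Or.inl h
      · right
        intro hcon
        apply hmin (a - 1) (by omega)
        intro x hx
        simp only [Finset.mem_Icc] at hx
        rcases Nat.lt_or_ge x a with hx' | hx'
        · have : x = a - 1 := by omega
          rw [this]; exact hcon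
        · exact ha (Finset.mem_Icc.mpr ⟨hx', hx.2⟩)
    set B := A \ Finset.Icc a m with hB
    have hBsub : B ⊆ A := Finset.sdiff_subset
    have hBss : B ⊂ A := by
      refine Finset.ssubset_iff_of_subset hBsub |>.mpr ⟨m, hmA, ?_⟩
      simp [hB, Finset.mem_Icc, ham]
    -- elements of B are small
    have hBlt : ∀ x ∈ B, x + 1 < a := by
      intro x hx
      simp only [hB, Finset.mem_sdiff, Finset.mem_Icc, not_and, not_le] at hx
      have hxm : x ≤ m := hmax x hx.1
      have hxa : x < a := by
        by_contra hc
        exact absurd (hx.2 (by omega)) (by omega)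
      rcases Nat.lt_or_ge (x+1) a with h | h
      · exact h
      · have : x = a - 1 := by omega
        rcases h0 with h0 | h0
        · omega
        · rw [this] at hx; exact absurd hx.1 h0
    -- boundary decomposition
    have hbdry : bdry A = bdry B ∪ {a, m} := by
      ext x
      simp only [bdry, Finset.mem_union, Finset.mem_filter, Finset.mem_insert,
        Finset.mem_singleton]
      constructor
      · rintro ⟨hxA, hcond⟩
        by_cases hxI : x ∈ Finset.Icc a m
        · simp only [Finset.mem_Icc] at hxI
          right
          by_contra hc
          push_neg at hc
          have h1 : a < x := lt_of_le_of_ne hxI.1 (Ne.symm hc.1)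
          have h2 : x < m := lt_of_le_of_ne hxI.2 hc.2
          have hm1 : x - 1 ∈ A := ha (Finset.mem_Icc.mpr ⟨by omega, by omega⟩)
          have hp1 : x + 1 ∈ A := ha (Finset.mem_Icc.mpr ⟨by omega, by omega⟩)
          rcases hcond with h | h | h
          · omega
          · exact h hm1
          · exact h hp1
        · left
          have hxB : x ∈ B := Finset.mem_sdiff.mpr ⟨hxA, hxI⟩
          refine ⟨hxB, ?_⟩
          rcases hcond with h | h | h
          · exact Or.inl h
          · exact Or.inr (Or.inl (fun hc => h (hBsub hc)))
          · exact Or.inr (Or.inr (fun hc => h (hBsub hc)))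
      · rintro (⟨hxB, hcond⟩ | h | h)
        · have hxa := hBlt x hxB
          refine ⟨hBsub hxB, ?_⟩
          rcases hcond with h | h | h
          · exact Or.inl h
          · refine Or.inr (Or.inl (fun hc => h ?_))
            refine Finset.mem_sdiff.mpr ⟨hc, ?_⟩
            simp only [Finset.mem_Icc]; omega
          · refine Or.inr (Or.inr (fun hc => h ?_))
            refine Finset.mem_sdiff.mpr ⟨hc, ?_⟩
            simp only [Finset.mem_Icc]; omega
        · subst h
          exact ⟨haA, by tauto⟩
        · subst h
          refine ⟨hmA, Or.inr (Or.inr (fun hc => ?_))⟩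
          have := hmax _ hc
          omega
    have hdisj : Disjoint (bdry B) ({a, m} : Finset ℕ) := by
      rw [Finset.disjoint_left]
      intro x hx
      have hxB : x ∈ B := Finset.mem_of_mem_filter x hx
      have := hBlt x hxB
      simp only [Finset.mem_insert, Finset.mem_singleton]
      omega
    -- perimeter decomposition
    have hper : per A = per B + ∑ x ∈ ({a, m} : Finset ℕ), x := by
      rw [per, hbdry, Finset.sum_union hdisj]; rfl
    -- volume decomposition
    have hvol : vol A = vol B + ∑ x ∈ Finset.Icc a m, x := by
      rw [vol, vol, ← Finset.sum_sdiff ha]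
    have hgauss : (∑ x ∈ Finset.Icc a m, x) * 2 = (a + m) * (m + 1 - a) := by
      have hsplit : (∑ i ∈ Finset.Ico 0 a, i) + ∑ i ∈ Finset.Ico a (m+1), i
          = ∑ i ∈ Finset.Ico 0 (m+1), i :=
        Finset.sum_Ico_consecutive _ (Nat.zero_le a) (by omega)
      rw [Finset.Ico_add_one_right_eq_Icc] at hsplit
      have g1 : (∑ i ∈ Finset.range (m+1), i) * 2 = (m+1) * m := by
        rw [Finset.sum_range_id_mul_two]; simp
      have g2 : (∑ i ∈ Finset.range a, i) * 2 = a * (a-1) :=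
        Finset.sum_range_id_mul_two a
      rw [Finset.range_eq_Ico] at g1 g2
      have hle : a * (a - 1) ≤ (m + 1) * m := by
        apply Nat.mul_le_mul (by omega) (by omega)
      have : (∑ x ∈ Finset.Icc a m, x) * 2 = (m+1) * m - a * (a-1) := by omega
      rw [this]
      rcases Nat.eq_zero_or_pos a with h | h
      · rw [h]; simp [Nat.mul_comm]
      · zify [hle, show 1 ≤ a from h, show a ≤ m + 1 by omega]
        ring
    have hIB := ih B hBss
    set p := per B with hp
    set q := ∑ x ∈ ({a, m} : Finset ℕ), x with hq
    have hqval : (a + m) * (m + 1 - a) ≤ q * (q + 1) := by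
      rcases eq_or_ne a m with h | h
      · have hqv : q = m := by simp [hq, h]
        rw [hqv, h]
        have : m + 1 - m = 1 := by omega
        rw [this]
        rcases Nat.eq_zero_or_pos m with hm0 | hm0
        · rw [hm0]
        · have hmm : m * 1 ≤ m * m := mul_le_mul_of_nonneg_left hm0 (Nat.zero_le m)
          nlinarith [hmm]
      · have : q = a + m := by
          rw [hq, Finset.sum_pair h]
        rw [this]
        have h1 : m + 1 - a ≤ a + m + 1 := by omega
        exact Nat.mul_le_mul_left _ h1
    calc 2 * vol A = 2 * vol B + (∑ x ∈ Finset.Icc a m, x) * 2 := by rw [hvol]; ring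
      _ ≤ p * (p + 1) + q * (q + 1) := by
          rw [hgauss]; exact Nat.add_le_add hIB hqval
      _ ≤ (p + q) * (p + q + 1) := by nlinarith
      _ = per A * (per A + 1) := by rw [hper]

theorem stmt1 (A : Finset ℕ) (n : ℕ) (hn : 1 ≤ n) (h : vol A = n) :
    (-1 + Real.sqrt (1 + 8 * n)) / 2 ≤ (per A : ℝ) ∧
    Real.sqrt (2 * n) - 1 / 2 < (per A : ℝ) := by
  have hk := key A
  rw [h] at hk
  set p := per A with hp
  have hcast : (2 * n : ℝ) ≤ p * (p + 1) := by exact_mod_cast hk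
  have hs : Real.sqrt (1 + 8 * n) ≤ 2 * p + 1 := by
    rw [show (2 * (p:ℝ) + 1) = Real.sqrt ((2 * p + 1)^2) by
      rw [Real.sqrt_sq (by positivity)]]
    apply Real.sqrt_le_sqrt
    nlinarith
  constructor
  · linarith
  · have ht : Real.sqrt (2 * n) < Real.sqrt (1 + 8 * n) / 2 := by
      have h1 : Real.sqrt (2 * n) ≥ 0 := Real.sqrt_nonneg _
      have h2 : Real.sqrt (1 + 8 * n) ≥ 0 := Real.sqrt_nonneg _
      have e1 : Real.sqrt (2 * n) ^ 2 = 2 * n := Real.sq_sqrt (by positivity)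
      have e2 : Real.sqrt (1 + 8 * n) ^ 2 = 1 + 8 * n := Real.sq_sqrt (by positivity)
      nlinarith [sq_nonneg (Real.sqrt (1 + 8 * n) - 2 * Real.sqrt (2 * n)),
        sq_nonneg (Real.sqrt (1 + 8 * n) + 2 * Real.sqrt (2 * n))]
    linarith
end

section
/- If A is a finite nonempty subset of the nonnegative integers with maximum element m, then per(Aᶜ) ≥ m+1, with equality if and only if {1, 2, ..., m} ⊆ A, where Aᶜ = ℕ \ A. -/
open Finset

theorem stmt2 (A : Finset ℕ) (hA : A.Nonempty) :
    A.max' hA + 1 ≤ sPer ((↑A : Set ℕ)ᶜ) ∧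
    (sPer ((↑A : Set ℕ)ᶜ) = A.max' hA + 1 ↔
      ∀ x : ℕ, 1 ≤ x → x ≤ A.max' hA → x ∈ A) := by
  set m := A.max' hA with hm
  have hmA : m ∈ A := A.max'_mem hA
  have hle : ∀ x ∈ A, x ≤ m := fun x hx => A.le_max' x hx
  set B := (Finset.range (m+2)).filter
      (fun x => x ∉ A ∧ (x = 0 ∨ x - 1 ∈ A ∨ x + 1 ∈ A)) with hB
  have hset : sBdry ((↑A : Set ℕ)ᶜ) = ↑B := by
    ext x
    simp only [sBdry, Set.mem_setOf_eq, Set.mem_compl_iff, Finset.mem_coe,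
      Finset.coe_mem, not_not, hB, Finset.mem_filter, Finset.mem_range]
    constructor
    · rintro ⟨hxA, h⟩
      refine ⟨?_, hxA, h⟩
      rcases h with h0 | h1 | h2
      · omega
      · have := hle _ h1; omega
      · have := hle _ h2; omega
    · rintro ⟨_, hxA, h⟩
      exact ⟨hxA, h⟩
  have hper : sPer ((↑A : Set ℕ)ᶜ) = ∑ x ∈ B, x := by
    rw [sPer, hset, finsum_mem_coe_finset]
  have hm1B : m + 1 ∈ B := by
    simp only [hB, Finset.mem_filter, Finset.mem_range]
    refine ⟨by omega, fun h => by have := hle _ h; omega, Or.inr (Or.inl ?_)⟩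
    simpa using hmA
  have hge : m + 1 ≤ ∑ x ∈ B, x :=
    Finset.single_le_sum (fun i _ => Nat.zero_le i) hm1B
  refine ⟨by rw [hper]; exact hge, ?_⟩
  constructor
  · intro heq x hx1 hxm
    by_contra hxA
    set C := (Finset.range (m+1)).filter (fun y => y ∉ A ∧ 1 ≤ y) with hC
    have hxC : x ∈ C := by
      simp only [hC, Finset.mem_filter, Finset.mem_range]
      exact ⟨by omega, hxA, hx1⟩
    have hCne : C.Nonempty := ⟨x, hxC⟩
    set y := C.max' hCne with hy
    have hyC : y ∈ C := C.max'_mem hCne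
    simp only [hC, Finset.mem_filter, Finset.mem_range] at hyC
    obtain ⟨hyr, hyA, hy1⟩ := hyC
    have hym : y ≠ m := fun h => hyA (h ▸ hmA)
    have hy1A : y + 1 ∈ A := by
      by_contra h
      have : y + 1 ∈ C := by
        simp only [hC, Finset.mem_filter, Finset.mem_range]
        exact ⟨by omega, h, by omega⟩
      have := C.le_max' _ this
      omega
    have hyB : y ∈ B := by
      simp only [hB, Finset.mem_filter, Finset.mem_range]
      exact ⟨by omega, hyA, Or.inr (Or.inr hy1A)⟩
    have hsub : ({y, m+1} : Finset ℕ) ⊆ B := by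
      intro z hz
      simp only [Finset.mem_insert, Finset.mem_singleton] at hz
      rcases hz with rfl | rfl
      · exact hyB
      · exact hm1B
    have := Finset.sum_le_sum_of_subset (f := id) hsub
    rw [Finset.sum_pair (by omega : y ≠ m + 1)] at this
    simp only [id] at this
    rw [hper] at heq
    omega
  · intro H
    have hsub : B ⊆ {0, m+1} := by
      intro z hz
      simp only [hB, Finset.mem_filter, Finset.mem_range] at hz
      obtain ⟨hzr, hzA, _⟩ := hz
      simp only [Finset.mem_insert, Finset.mem_singleton]
      by_contra h
      push_neg at h
      exact hzA (H z (by omega) (by omega))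
    have hle2 : ∑ x ∈ B, x ≤ ∑ x ∈ ({0, m+1} : Finset ℕ), x :=
      Finset.sum_le_sum_of_subset hsub
    rw [Finset.sum_pair (by omega : (0:ℕ) ≠ m + 1)] at hle2
    rw [hper]
    omega
end

section
/- If A is a finite subset of the nonnegative integers with vol(A) = n ≥ 1, then per(Aᶜ) ≥ (-1 + √(1+8n))/2 + 1; in particular per(Aᶜ) > √(2n) + 1/2. -/
open Finset

theorem stmt3 (A : Finset ℕ) (n : ℕ) (hn : 1 ≤ n) (h : vol A = n) :
    (-1 + Real.sqrt (1 + 8 * n)) / 2 + 1 ≤ (sPer ((↑A : Set ℕ)ᶜ) : ℝ) ∧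
    Real.sqrt (2 * n) + 1 / 2 < (sPer ((↑A : Set ℕ)ᶜ) : ℝ) := by
  have hA : A.Nonempty := by
    rcases A.eq_empty_or_nonempty with rfl | h'
    · simp [vol] at h; omega
    · exact h'
  set m := A.max' hA with hm
  have hmem : m ∈ A := A.max'_mem hA
  have hle : ∀ x ∈ A, x ≤ m := fun x hx => A.le_max' x hx
  -- 2n ≤ m(m+1)
  have hsub : A ⊆ Finset.range (m + 1) := fun x hx => Finset.mem_range.2 (by
    have := hle x hx; omega)
  have hvol : n ≤ ∑ i ∈ Finset.range (m + 1), i := by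
    rw [← h]; exact Finset.sum_le_sum_of_subset hsub
  have hgauss : (∑ i ∈ Finset.range (m + 1), i) * 2 = (m + 1) * m :=
    Finset.sum_range_id_mul_two (m + 1)
  have h2n : 2 * n ≤ m * (m + 1) := by nlinarith
  -- boundary of complement
  have hbd : sBdry ((↑A : Set ℕ)ᶜ) ⊆ Set.Iic (m + 1) := by
    rintro x ⟨hx, h0 | h1 | h2⟩
    · simp [h0]
    · simp only [Set.mem_compl_iff, Finset.mem_coe, not_not] at h1
      have := hle _ h1; simp [Set.mem_Iic]; omega
    · simp only [Set.mem_compl_iff, Finset.mem_coe, not_not] at h2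
      have := hle _ h2; simp [Set.mem_Iic]; omega
  have hfin : (sBdry ((↑A : Set ℕ)ᶜ)).Finite := (Set.finite_Iic (m + 1)).subset hbd
  have hmem1 : m + 1 ∈ sBdry ((↑A : Set ℕ)ᶜ) := by
    refine ⟨?_, Or.inr (Or.inl ?_)⟩
    · simp only [Set.mem_compl_iff, Finset.mem_coe]
      intro hc; have := hle _ hc; omega
    · simp only [Set.mem_compl_iff, Finset.mem_coe, not_not]
      simpa using hmem
  have hper : m + 1 ≤ sPer ((↑A : Set ℕ)ᶜ) := by
    rw [sPer, finsum_mem_eq_finite_toFinset_sum _ hfin]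
    exact Finset.single_le_sum (f := fun x => x) (fun i _ => Nat.zero_le i)
      (hfin.mem_toFinset.2 hmem1)
  have hperR : (m : ℝ) + 1 ≤ (sPer ((↑A : Set ℕ)ᶜ) : ℝ) := by exact_mod_cast hper
  have h2nR : (2 * n : ℝ) ≤ m * (m + 1) := by exact_mod_cast h2n
  constructor
  · have hs : Real.sqrt (1 + 8 * n) ≤ 2 * m + 1 := by
      rw [show (2 * (m:ℝ) + 1) = Real.sqrt ((2 * m + 1) ^ 2) from
        (Real.sqrt_sq (by positivity)).symm]
      apply Real.sqrt_le_sqrt; nlinarith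
    nlinarith
  · have hs : Real.sqrt (2 * n) < m + 1 / 2 := by
      have : Real.sqrt (2 * n) < Real.sqrt ((m + 1 / 2) ^ 2) := by
        apply Real.sqrt_lt_sqrt (by positivity); nlinarith
      rwa [Real.sqrt_sq (by positivity)] at this
    nlinarith
end

section
/- Let g(n) = f(n)(f(n)+1)/2 − n where f(n) = ⌈(-1+√(1+8n))/2⌉, and let g^L denote the L-fold iterate of g. Then for all integers L ≥ 0 and n ≥ 0, g^L(n) ≤ 2·(n/2)^(1/2^L). -/
open Finset

lemma aux (F n : ℕ) (hF : 0 < F) (h : F * (F - 1) < 2 * n) :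
    F * (F + 1) / 2 - n ≤ F - 1 := by
  obtain ⟨m, rfl⟩ : ∃ m, F = m + 1 := ⟨F - 1, (Nat.succ_pred_eq_of_pos hF).symm⟩
  have h1 : (m + 1) * (m + 1 + 1) = (m + 1) * (m + 1 - 1) + 2 * (m + 1) := by
    simp; ring
  omega

lemma g_le (n : ℕ) : (gN n : ℝ) ≤ Real.sqrt (2 * n) := by
  have hsq0 : (0:ℝ) ≤ 1 + 8 * n := by positivity
  set s : ℝ := Real.sqrt (1 + 8 * n) with hs
  have hs2 : s ^ 2 = 1 + 8 * n := Real.sq_sqrt hsq0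
  have hs1 : (1:ℝ) ≤ s := by
    rw [show (1:ℝ) = Real.sqrt 1 by simp]
    exact Real.sqrt_le_sqrt (by linarith)
  have hx0 : (0:ℝ) ≤ (-1 + s) / 2 := by linarith
  have hc0 : (0:ℤ) ≤ ⌈(-1 + s) / 2⌉ := Int.ceil_nonneg hx0
  have hFr : (fN n : ℝ) = ((⌈(-1 + s) / 2⌉ : ℤ) : ℝ) := by
    rw [fN, ← hs]
    exact_mod_cast Int.toNat_of_nonneg hc0
  have hsqrt2n : (0:ℝ) ≤ Real.sqrt (2 * n) := Real.sqrt_nonneg _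
  have h2n : Real.sqrt (2 * n) ^ 2 = 2 * n := Real.sq_sqrt (by positivity)
  have hxle : (-1 + s) / 2 ≤ Real.sqrt (2 * n) := by
    nlinarith [hs2, h2n]
  rcases Nat.eq_zero_or_pos (fN n) with hF | hF
  · simp [gN, hF]
  · have hFu : (fN n : ℝ) < (-1 + s) / 2 + 1 := by
      rw [hFr]; exact_mod_cast Int.ceil_lt_add_one _
    have hF1 : (1:ℝ) ≤ (fN n : ℝ) := by exact_mod_cast hF
    have hkey : (fN n : ℝ) * ((fN n : ℝ) - 1) < 2 * n := by nlinarith [hs2]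
    have hnat : fN n * (fN n - 1) < 2 * n := by
      have : ((fN n * (fN n - 1) : ℕ) : ℝ) < ((2 * n : ℕ) : ℝ) := by
        push_cast [Nat.cast_sub hF]
        convert hkey using 2
      exact_mod_cast this
    have hle : gN n ≤ fN n - 1 := aux _ _ hF hnat
    calc (gN n : ℝ) ≤ ((fN n - 1 : ℕ) : ℝ) := by exact_mod_cast hle
      _ = (fN n : ℝ) - 1 := by push_cast [hF]; ring
      _ ≤ (-1 + s) / 2 := by linarith
      _ ≤ Real.sqrt (2 * n) := hxle

theorem stmt8 (L n : ℕ) :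
    (gN^[L] n : ℝ) ≤ 2 * ((n : ℝ) / 2) ^ ((1 : ℝ) / 2 ^ L) := by
  induction L generalizing n with
  | zero => simp; linarith
  | succ L ih =>
    rw [Function.iterate_succ_apply]
    have h1 := ih (gN n)
    have hsqd : Real.sqrt (2 * n) / 2 = Real.sqrt ((n:ℝ) / 2) := by
      rw [show ((n:ℝ)/2) = (2*(n:ℝ))/4 by ring, Real.sqrt_div (by positivity),
        show Real.sqrt 4 = 2 by
          rw [show (4:ℝ) = 2^2 by norm_num, Real.sqrt_sq (by norm_num)]]
    have h2' : (gN n : ℝ) / 2 ≤ ((n:ℝ)/2) ^ ((1:ℝ)/2) := by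
      have := g_le n
      calc (gN n : ℝ) / 2 ≤ Real.sqrt (2*n) / 2 := by linarith
        _ = Real.sqrt ((n:ℝ)/2) := hsqd
        _ = ((n:ℝ)/2) ^ ((1:ℝ)/2) := Real.sqrt_eq_rpow _
    have h3 : (2:ℝ) * ((gN n : ℝ)/2) ^ ((1:ℝ)/2^L) ≤
        2 * (((n:ℝ)/2) ^ ((1:ℝ)/2)) ^ ((1:ℝ)/2^L) := by
      have := Real.rpow_le_rpow (by positivity) h2' (by positivity : (0:ℝ) ≤ 1/2^L)
      linarith
    calc (gN^[L] (gN n) : ℝ) ≤ 2 * ((gN n : ℝ)/2) ^ ((1:ℝ)/2^L) := h1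
      _ ≤ 2 * (((n:ℝ)/2) ^ ((1:ℝ)/2)) ^ ((1:ℝ)/2^L) := h3
      _ = 2 * ((n:ℝ)/2) ^ ((1:ℝ)/2^(L+1)) := by
          rw [← Real.rpow_mul (by positivity)]
          congr 1
          rw [pow_succ]; ring
end

section
/- Define P(n) as the minimum of per(A) over all finite subsets A of ℕ with vol(A) = n. Then for all n ≥ 1, P(n) ≥ f(n), where f(n) = ⌈(-1+√(1+8n))/2⌉. -/
open Finset

lemma fN_le_of (n m : ℕ) (h : 2 * n ≤ m * (m + 1)) : fN n ≤ m := by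
  unfold fN
  have h1 : Real.sqrt (1 + 8 * n) ≤ 2 * m + 1 := by
    rw [show ((2 : ℝ) * m + 1) = Real.sqrt ((2 * m + 1) ^ 2) by
      rw [Real.sqrt_sq (by positivity)]]
    apply Real.sqrt_le_sqrt
    have : (2 * n : ℝ) ≤ m * (m + 1) := by exact_mod_cast h
    nlinarith
  have h2 : (-1 + Real.sqrt (1 + 8 * n)) / 2 ≤ m := by linarith
  have h3 : (⌈(-1 + Real.sqrt (1 + 8 * n)) / 2⌉ : ℤ) ≤ (m : ℤ) :=
    Int.ceil_le.mpr (by push_cast; linarith)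
  omega

theorem stmt9 (n : ℕ) (hn : 1 ≤ n) : fN n ≤ Pmin n := by
  unfold Pmin
  have hS : {p | ∃ A : Finset ℕ, vol A = n ∧ per A = p}.Nonempty :=
    ⟨per {n}, {n}, by simp [vol], rfl⟩
  apply le_csInf hS
  rintro p ⟨A, hA, rfl⟩
  have hne : A.Nonempty := by
    rcases A.eq_empty_or_nonempty with h | h
    · simp [h, vol] at hA; omega
    · exact h
  set m := A.max' hne with hm
  have hmem : m ∈ A := A.max'_mem hne
  have hmb : m ∈ bdry A := by
    simp only [bdry, mem_filter]
    refine ⟨hmem, Or.inr (Or.inr fun hc => ?_)⟩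
    have := A.le_max' _ hc
    omega
  have h1 : m ≤ per A := by
    unfold per
    exact Finset.single_le_sum (fun i _ => Nat.zero_le i) hmb
  have hsub : A ⊆ Finset.range (m + 1) := fun x hx =>
    Finset.mem_range.mpr (by have := A.le_max' x hx; omega)
  have h2 : n ≤ ∑ x ∈ Finset.range (m + 1), x := by
    rw [← hA]; exact Finset.sum_le_sum_of_subset hsub
  rw [Finset.sum_range_id] at h2
  have h2' : n ≤ (m + 1) * m / 2 := by simpa using h2
  obtain ⟨k, hk⟩ := Nat.even_mul_succ_self m
  have hmm : (m + 1) * m = m * (m + 1) := by ring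
  have h3 : 2 * n ≤ m * (m + 1) := by omega
  exact (fN_le_of n m h3).trans h1
end

section
/- Define Q(n) as the minimum of per(Aᶜ) over all finite subsets A of ℕ with vol(A) = n. Then for all n ≥ 1, Q(n) ≥ f(n) + 1, where f(n) = ⌈(-1+√(1+8n))/2⌉. -/
open Finset

open Classical in
lemma stmt10_key (n : ℕ) (hn : 1 ≤ n) (A : Finset ℕ) (hA : vol A = n) :
    fN n + 1 ≤ sPer ((↑A : Set ℕ)ᶜ) := by
  have hne : A.Nonempty := by
    rcases A.eq_empty_or_nonempty with h | h
    · exfalso; simp [h, vol] at hA; omega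
    · exact h
  set m := A.max' hne with hm
  have hsub : A ⊆ Finset.range (m + 1) := by
    intro x hx
    simp only [Finset.mem_range]
    exact Nat.lt_succ_of_le (A.le_max' x hx)
  have hsum : n ≤ ∑ x ∈ Finset.range (m + 1), x := by
    rw [← hA, vol]; exact Finset.sum_le_sum_of_subset hsub
  have hgauss : (∑ x ∈ Finset.range (m + 1), x) * 2 = (m + 1) * m :=
    Finset.sum_range_id_mul_two (m + 1)
  have h2n : 2 * n ≤ m * (m + 1) := by nlinarith
  -- f(n) ≤ m
  have hf : fN n ≤ m := by
    rw [fN]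
    have h1 : Real.sqrt (1 + 8 * n) ≤ 2 * m + 1 := by
      rw [show (2 * (m:ℝ) + 1) = Real.sqrt ((2 * m + 1)^2) by
        rw [Real.sqrt_sq (by positivity)]]
      apply Real.sqrt_le_sqrt
      have hc : (2 * n : ℝ) ≤ m * (m + 1) := by exact_mod_cast h2n
      nlinarith
    have h2 : (⌈(-1 + Real.sqrt (1 + 8 * n)) / 2⌉ : ℤ) ≤ m := by
      apply Int.ceil_le.mpr
      rw [div_le_iff₀ (by norm_num)]
      push_cast
      linarith
    exact_mod_cast Int.toNat_le.mpr h2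
  -- boundary of complement
  set S : Set ℕ := ((↑A : Set ℕ)ᶜ) with hS
  have hmemA : m ∈ A := A.max'_mem hne
  have hm1 : m + 1 ∈ sBdry S := by
    constructor
    · intro h
      exact absurd (A.le_max' _ h) (by omega)
    · right; left
      simp only [S, Set.not_notMem, Set.mem_compl_iff]
      simpa using hmemA
  set B : Finset ℕ := (Finset.range (m + 2)).filter (· ∈ sBdry S) with hB
  have hBeq : sBdry S = ↑B := by
    ext x
    simp only [hB, Finset.coe_filter, Finset.mem_range, Set.mem_setOf_eq]
    constructor
    · intro hx
      refine ⟨?_, hx⟩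
      by_contra hlt
      push_neg at hlt
      obtain ⟨hxS, hx0⟩ := hx
      rcases hx0 with h0 | h1 | h2
      · omega
      · apply h1
        intro hmem
        exact absurd (A.le_max' _ hmem) (by omega)
      · apply h2
        intro hmem
        exact absurd (A.le_max' _ hmem) (by omega)
    · exact fun h => h.2
  have hperS : sPer S = ∑ x ∈ B, x := by
    rw [sPer, hBeq, finsum_mem_coe_finset]
  have hm1B : m + 1 ∈ B := by
    rw [hBeq] at hm1; exact_mod_cast hm1
  have : m + 1 ≤ ∑ x ∈ B, x :=
    Finset.single_le_sum (fun i _ => Nat.zero_le i) hm1B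
  omega

theorem stmt10 (n : ℕ) (hn : 1 ≤ n) : fN n + 1 ≤ Qmin n := by
  have hne : {p | ∃ A : Finset ℕ, vol A = n ∧ sPer ((↑A : Set ℕ)ᶜ) = p}.Nonempty :=
    ⟨_, {n}, by simp [vol], rfl⟩
  rw [Qmin]
  obtain ⟨A, hA, hp⟩ := Nat.sInf_mem hne
  rw [← hp]
  exact stmt10_key n hn A hA
end

section
/- Let P(n) and Q(n) be as defined, and f(n) = ⌈(-1+√(1+8n))/2⌉, g(n) = f(n)(f(n)+1)/2 − n. Then for all n ≥ 0, P(n) ≤ f(n) + Q(g(n)). -/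
open Finset

theorem stmt11 (n : ℕ) : Pmin n ≤ fN n + Qmin (gN n) := by
  have hr0 : (0:ℝ) ≤ Real.sqrt (1 + 8 * n) := Real.sqrt_nonneg _
  have hr2 : Real.sqrt (1 + 8 * n) ^ 2 = 1 + 8 * n := Real.sq_sqrt (by positivity)
  have hr1 : (1:ℝ) ≤ Real.sqrt (1 + 8 * n) := by
    nlinarith [Nat.cast_nonneg (α := ℝ) n, sq_nonneg (Real.sqrt (1 + 8 * n) - 1)]
  set r : ℝ := Real.sqrt (1 + 8 * n) with hrdef
  have hcnn : (0:ℤ) ≤ ⌈(-1 + r) / 2⌉ := Int.ceil_nonneg (by linarith)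
  have hfc : ((fN n : ℕ) : ℤ) = ⌈(-1 + r) / 2⌉ := by
    show ((⌈(-1 + r)/2⌉).toNat : ℤ) = _
    exact Int.toNat_of_nonneg hcnn
  set f := fN n with hfdef
  -- upper bound: 2n ≤ f² + f
  have hup : 2 * n ≤ f * f + f := by
    have h1 : ((-1 + r) / 2 : ℝ) ≤ (f : ℝ) := by
      have := Int.le_ceil ((-1 + r) / 2)
      have h2 : ((⌈(-1 + r)/2⌉ : ℤ) : ℝ) = (f : ℝ) := by exact_mod_cast hfc.symm
      linarith
    have hreal : (2 * n : ℝ) ≤ (f:ℝ) * f + f := by nlinarith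
    exact_mod_cast hreal
  -- lower bound: f(f+1) ≤ 2n + 2f
  have hlow : f * (f + 1) ≤ 2 * n + 2 * f := by
    rcases Nat.eq_zero_or_pos f with hf0 | hf1
    · simp [hf0]
    · have h1 : (f : ℝ) < (-1 + r) / 2 + 1 := by
        have := Int.ceil_lt_add_one ((-1 + r) / 2)
        have h2 : ((⌈(-1 + r)/2⌉ : ℤ) : ℝ) = (f : ℝ) := by exact_mod_cast hfc.symm
        linarith
      have hf1R : (1:ℝ) ≤ f := by exact_mod_cast hf1
      have hreal : (f:ℝ) * f < 2 * n + f := by nlinarith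
      have hnat : f * f < 2 * n + f := by exact_mod_cast hreal
      nlinarith
  have hT2 : 2 * (f * (f + 1) / 2) = f * (f + 1) := by
    have : 2 ∣ f * (f + 1) := (Nat.even_mul_succ_self f).two_dvd
    omega
  have hup' : 2 * n ≤ f * (f + 1) := by
    have : f * (f + 1) = f * f + f := by ring
    omega
  have hgn : gN n = f * (f + 1) / 2 - n := rfl
  have hg_eq : gN n + n = f * (f + 1) / 2 := by omega
  have hg_le : gN n ≤ f := by omega
  -- get a witness for Qmin (gN n)
  have hQne : {p | ∃ A : Finset ℕ, vol A = gN n ∧ sPer ((↑A : Set ℕ)ᶜ) = p}.Nonempty := by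
    exact ⟨sPer ((↑({gN n} : Finset ℕ) : Set ℕ)ᶜ), {gN n}, by simp [vol], rfl⟩
  obtain ⟨B, hvolB, hperB⟩ := Nat.sInf_mem hQne
  have hBle : ∀ b ∈ B, b ≤ gN n := by
    intro b hb
    calc b ≤ ∑ x ∈ B, x := Finset.single_le_sum (fun i _ => Nat.zero_le i) hb
    _ = gN n := hvolB
  have hBsub : B ⊆ Finset.range (f + 1) := by
    intro b hb
    have := hBle b hb
    simp only [Finset.mem_range]
    omega
  set A : Finset ℕ := Finset.range (f + 1) \ B with hAdef
  have hvolA : vol A = n := by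
    have h1 : ∑ x ∈ A, x + ∑ x ∈ B, x = ∑ x ∈ Finset.range (f + 1), x :=
      Finset.sum_sdiff hBsub
    have h2 : ∑ x ∈ Finset.range (f + 1), x = (f + 1) * f / 2 := Finset.sum_range_id (f + 1)
    have h3 : (f + 1) * f = f * (f + 1) := by ring
    show ∑ x ∈ A, x = n
    rw [h2, h3] at h1
    have hvB : ∑ x ∈ B, x = gN n := hvolB
    omega
  -- the boundary finset of Bᶜ
  set D : Finset ℕ :=
    (insert 0 (B.image (· + 1) ∪ B.image (· - 1))).filter (· ∉ B) with hDdef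
  have hDmem : ∀ x : ℕ, x ∈ D ↔ x ∉ B ∧ (x = 0 ∨ x - 1 ∈ B ∨ x + 1 ∈ B) := by
    intro x
    simp only [hDdef, Finset.mem_filter, Finset.mem_insert, Finset.mem_union,
      Finset.mem_image]
    constructor
    · rintro ⟨h1, h2⟩
      refine ⟨h2, ?_⟩
      rcases h1 with h0 | ⟨b, hb, hbe⟩ | ⟨b, hb, hbe⟩
      · exact Or.inl h0
      · right; left; have : x - 1 = b := by omega
        rwa [this]
      · rcases Nat.eq_zero_or_pos b with hb0 | hb1
        · left; omega
        · right; right; have : x + 1 = b := by omega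
          rwa [this]
    · rintro ⟨hxB, h0 | h1 | h2⟩
      · exact ⟨Or.inl h0, hxB⟩
      · have hx1 : 0 < x := by
          rcases Nat.eq_zero_or_pos x with hx0 | hx1
          · subst hx0; exact absurd h1 hxB
          · exact hx1
        exact ⟨Or.inr (Or.inl ⟨x - 1, h1, by omega⟩), hxB⟩
      · exact ⟨Or.inr (Or.inr ⟨x + 1, h2, rfl⟩), hxB⟩
  have hDset : sBdry ((↑B : Set ℕ)ᶜ) = (↑D : Set ℕ) := by
    ext x
    simp only [sBdry, Set.mem_setOf_eq, Set.mem_compl_iff, Finset.mem_coe, not_not]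
    rw [hDmem x]
  have hsPerB : sPer ((↑B : Set ℕ)ᶜ) = ∑ x ∈ D, x := by
    show ∑ᶠ x ∈ sBdry ((↑B : Set ℕ)ᶜ), x = ∑ x ∈ D, x
    rw [hDset]
    exact finsum_mem_coe_finset _ D
  -- boundary of A is inside insert f D
  have hbdA : bdry A ⊆ insert f D := by
    intro x hx
    simp only [bdry, Finset.mem_filter] at hx
    obtain ⟨hxA, hcond⟩ := hx
    have hxA' := hxA
    rw [hAdef, Finset.mem_sdiff, Finset.mem_range] at hxA'
    obtain ⟨hxlt, hxB⟩ := hxA'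
    rcases Nat.eq_or_lt_of_le (Nat.lt_succ_iff.mp hxlt) with hxf | hxf
    · exact Finset.mem_insert.2 (Or.inl hxf)
    · refine Finset.mem_insert.2 (Or.inr ((hDmem x).2 ⟨hxB, ?_⟩))
      rcases hcond with h0 | h1 | h2
      · exact Or.inl h0
      · rcases Nat.eq_zero_or_pos x with hx0 | hx1
        · exact Or.inl hx0
        · right; left
          rw [hAdef, Finset.mem_sdiff, Finset.mem_range] at h1
          push_neg at h1
          exact h1 (by omega)
      · right; right
        rw [hAdef, Finset.mem_sdiff, Finset.mem_range] at h2
        push_neg at h2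
        exact h2 (by omega)
  have hperA : per A ≤ f + ∑ x ∈ D, x := by
    calc per A = ∑ x ∈ bdry A, x := rfl
    _ ≤ ∑ x ∈ insert f D, x :=
        Finset.sum_le_sum_of_subset hbdA
    _ ≤ f + ∑ x ∈ D, x := by
        by_cases h : f ∈ D
        · rw [Finset.insert_eq_self.2 h]; exact Nat.le_add_left _ _
        · rw [Finset.sum_insert h]
  have hP : Pmin n ≤ per A := Nat.sInf_le ⟨A, hvolA, rfl⟩
  calc Pmin n ≤ per A := hP
  _ ≤ f + ∑ x ∈ D, x := hperA
  _ = f + sPer ((↑B : Set ℕ)ᶜ) := by rw [hsPerB]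
  _ = fN n + Qmin (gN n) := by rw [hperB]; rfl
end

section
/- Let P(n) and Q(n) be as defined, and f(n) = ⌈(-1+√(1+8n))/2⌉, g(n) = f(n)(f(n)+1)/2 − n. Then for all n ≥ 0, Q(n) ≤ 1 + f(n) + P(g(n)). -/
open Finset

lemma fN_spec (n : ℕ) (hn : 1 ≤ n) :
    1 ≤ fN n ∧ 2*n ≤ fN n * (fN n + 1) ∧ fN n * (fN n - 1) < 2*n := by
  have h8 : (0:ℝ) ≤ 1 + 8*n := by positivity
  set s : ℝ := Real.sqrt (1 + 8*(n:ℝ)) with hs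
  have hsq : s^2 = 1 + 8*(n:ℝ) := Real.sq_sqrt h8
  have hsnn : 0 ≤ s := Real.sqrt_nonneg _
  have hs3 : (3:ℝ) ≤ s := by
    nlinarith [hsq, hsnn, (by exact_mod_cast hn : (1:ℝ) ≤ (n:ℝ))]
  set x : ℝ := (-1 + s) / 2 with hx
  have hx1 : (1:ℝ) ≤ x := by rw [hx]; linarith
  have hceil : (1:ℤ) ≤ ⌈x⌉ := by
    have h := Int.le_ceil x
    have : (1:ℝ) ≤ (⌈x⌉ : ℝ) := le_trans hx1 h
    exact_mod_cast this
  have hfc : (fN n : ℤ) = ⌈x⌉ := by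
    have hxx : ⌈(-1 + Real.sqrt (1 + 8 * (n:ℝ))) / 2⌉ = ⌈x⌉ := by rw [hx, hs]
    rw [fN, hxx, Int.toNat_of_nonneg (by omega)]
  have hfr : (fN n : ℝ) = (⌈x⌉ : ℝ) := by exact_mod_cast hfc
  have hf1 : 1 ≤ fN n := by
    have : (1:ℤ) ≤ (fN n : ℤ) := hfc ▸ hceil
    exact_mod_cast this
  have hup : 2*n ≤ fN n * (fN n + 1) := by
    have hxle : x ≤ (fN n : ℝ) := hfr ▸ Int.le_ceil x
    have hsle : s ≤ 2 * (fN n : ℝ) + 1 := by rw [hx] at hxle; linarith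
    have : (2*n : ℝ) ≤ (fN n : ℝ) * ((fN n : ℝ) + 1) := by nlinarith [hsq, hsnn]
    exact_mod_cast this
  have hlo : fN n * (fN n - 1) < 2*n := by
    have hxlt : (fN n : ℝ) < x + 1 := by
      rw [hfr]; exact Int.ceil_lt_add_one x
    have hslt : 2 * (fN n : ℝ) - 1 < s := by rw [hx] at hxlt; linarith
    have hfpos : (1:ℝ) ≤ (fN n : ℝ) := by exact_mod_cast hf1
    have key : (fN n : ℝ) * ((fN n : ℝ) - 1) < 2*n := by nlinarith [hsq, hslt, hfpos]
    have : ((fN n * (fN n - 1) : ℕ) : ℝ) < 2*n := by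
      push_cast [Nat.cast_sub hf1]
      exact key
    exact_mod_cast this
  exact ⟨hf1, hup, hlo⟩

theorem stmt12 (n : ℕ) : Qmin n ≤ 1 + fN n + Pmin (gN n) := by
  classical
  rcases Nat.eq_zero_or_pos n with rfl | hn
  · have h0 : Qmin 0 ≤ 0 := by
      apply Nat.sInf_le
      refine ⟨∅, rfl, ?_⟩
      have h1 : ((↑(∅ : Finset ℕ) : Set ℕ))ᶜ = Set.univ := by simp
      have h2 : sBdry Set.univ = {0} := by
        ext y; simp [sBdry]
      rw [sPer, h1, h2]
      simpa using finsum_mem_singleton (f := fun y : ℕ => (y:ℕ)) (a := 0)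
    omega
  obtain ⟨hf1, hupper, hlower⟩ := fN_spec n hn
  obtain ⟨m, hm⟩ : ∃ m, fN n = m + 1 := ⟨fN n - 1, by omega⟩
  set f := fN n with hfdef
  -- Gauss sum
  set T := ∑ x ∈ Icc 1 f, x with hTdef
  have hT : T * 2 = f * (f + 1) := by
    have h1 : range (f+1) = insert 0 (Icc 1 f) := by
      ext y; simp [Nat.lt_succ_iff]; omega
    have h2 := Finset.sum_range_id_mul_two (f+1)
    rw [h1, Finset.sum_insert (by simp)] at h2
    simpa [Nat.mul_comm] using h2
  have e1 : (m+1) * ((m+1) + 1) = (m+1) * m + 2*m + 2 := by ring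
  rw [hm] at hT hupper hlower
  simp only [Nat.add_sub_cancel] at hlower
  -- linear consequences
  have hgval : gN n = T - n := by
    rw [gN, ← hfdef, hm]
    rw [show (m+1) * ((m+1) + 1) = T * 2 from hT.symm]
    omega
  have hnT : n ≤ T := by omega
  have hglt : gN n < f := by rw [hgval, hm]; omega
  -- minimizer B for Pmin (gN n)
  have hne : {p | ∃ A : Finset ℕ, vol A = gN n ∧ per A = p}.Nonempty :=
    ⟨per {gN n}, {gN n}, by simp [vol], rfl⟩
  obtain ⟨B, hBvol, hBper⟩ := Nat.sInf_mem hne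
  have hBle : ∀ x ∈ B, x ≤ gN n := by
    intro x hx
    rw [← hBvol]
    exact Finset.single_le_sum (f := fun y : ℕ => y) (fun i _ => Nat.zero_le i) hx
  set B' := B.erase 0 with hB'def
  have hB'sub : B' ⊆ Icc 1 f := by
    intro x hx
    rw [hB'def, Finset.mem_erase] at hx
    have := hBle x hx.2
    rw [Finset.mem_Icc]
    omega
  have hB'vol : ∑ x ∈ B', x = gN n := by
    rw [hB'def, Finset.sum_erase (f := fun y : ℕ => y) B rfl]
    exact hBvol
  set A : Finset ℕ := Icc 1 f \ B' with hAdef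
  have hAvol : vol A = n := by
    have h := Finset.sum_sdiff (f := fun y : ℕ => y) hB'sub
    have h2 : vol A + gN n = T := by rw [← hB'vol]; exact h
    omega
  -- the bound
  set S : Set ℕ := ((↑A : Set ℕ))ᶜ with hSdef
  have hQ : Qmin n ≤ sPer S := Nat.sInf_le ⟨A, hAvol, rfl⟩
  set G : Finset ℕ := insert 0 (insert (f+1) (bdry B)) with hGdef
  have hnotS : ∀ y : ℕ, y ∉ S ↔ (1 ≤ y ∧ y ≤ f ∧ ¬(y ≠ 0 ∧ y ∈ B)) := by
    intro y
    simp only [hSdef, Set.mem_compl_iff, not_not, Finset.mem_coe, hAdef,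
      Finset.mem_sdiff, Finset.mem_Icc, hB'def, Finset.mem_erase]
    tauto
  have hsub : sBdry S ⊆ ↑G := by
    intro y hy
    obtain ⟨hyS, hcond⟩ := hy
    simp only [hGdef, Finset.coe_insert, Set.mem_insert_iff, Finset.mem_coe,
      Finset.mem_insert]
    rw [bdry, Finset.mem_filter]
    rcases hcond with rfl | hL | hR
    · left; rfl
    · -- y - 1 ∉ S
      rw [hnotS] at hL
      obtain ⟨h1, h2, h3⟩ := hL
      by_cases hyf : y = f + 1
      · right; left; exact hyf
      · have hy1 : 1 ≤ y := by omega
        have hyle : y ≤ f := by omega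
        have hyB : y ∈ B := by
          by_contra hc
          exact (hnotS y).mpr ⟨hy1, hyle, fun h => hc h.2⟩ hyS
        right; right
        refine ⟨hyB, Or.inr (Or.inl ?_)⟩
        intro hc
        exact h3 ⟨by omega, hc⟩
    · -- y + 1 ∉ S
      rw [hnotS] at hR
      obtain ⟨h1, h2, h3⟩ := hR
      have hy1 : 1 ≤ y ∨ y = 0 := by omega
      rcases hy1 with hy1 | rfl
      · have hyle : y ≤ f := by omega
        have hyB : y ∈ B := by
          by_contra hc
          exact (hnotS y).mpr ⟨hy1, hyle, fun h => hc h.2⟩ hyS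
        right; right
        refine ⟨hyB, Or.inr (Or.inr ?_)⟩
        intro hc
        exact h3 ⟨by omega, hc⟩
      · left; rfl
  have hf1notB : f + 1 ∉ bdry B := by
    intro hc
    have := hBle _ (Finset.mem_filter.mp hc).1
    omega
  have hGsum : ∑ x ∈ G, x ≤ (f+1) + per B := by
    rw [hGdef]
    have hinner : ∑ x ∈ insert (f+1) (bdry B), x = (f+1) + per B := by
      rw [Finset.sum_insert hf1notB, per]
    by_cases h0 : (0:ℕ) ∈ insert (f+1) (bdry B)
    · rw [Finset.insert_eq_self.mpr h0, hinner]
    · rw [Finset.sum_insert h0, hinner]; omega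
  have hkey : sPer S ≤ ∑ x ∈ G, x := by
    rw [sPer]
    have hrep : sBdry S = ↑(G.filter (fun y => y ∈ sBdry S)) := by
      ext y
      simp only [Finset.coe_filter, Set.mem_setOf_eq]
      exact ⟨fun h => ⟨hsub h, h⟩, fun h => h.2⟩
    rw [hrep, finsum_mem_coe_finset]
    exact Finset.sum_le_sum_of_subset (Finset.filter_subset _ _)
  calc Qmin n ≤ sPer S := hQ
    _ ≤ ∑ x ∈ G, x := hkey
    _ ≤ (f+1) + per B := hGsum
    _ = 1 + f + Pmin (gN n) := by
        have hBper' : per B = Pmin (gN n) := hBper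
        rw [hBper']; omega
end

section
/- Let n ≥ 1, f(n) = ⌈(-1+√(1+8n))/2⌉, g(n) = f(n)(f(n)+1)/2 − n, and let m > f(n) be an integer. If A ⊆ {0,...,m−1} with vol(A) = m(m+1)/2 − n, then per(A) ≥ √(2(g(n)+f(n)+1)) − 1/2, and hence m + per(A) ≥ f(n) + √(2(g(n)+f(n)+1)) + 1/2. -/
open Finset

lemma vol_le_per (A : Finset ℕ) : vol A ≤ per A * (per A + 1) / 2 := by
  rcases A.eq_empty_or_nonempty with h | h
  · simp [h, vol]
  · have hMb : A.max' h ∈ bdry A := by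
      simp only [bdry, Finset.mem_filter]
      refine ⟨A.max'_mem h, Or.inr (Or.inr fun hc => ?_)⟩
      have := A.le_max' _ hc
      omega
    have hMP : A.max' h ≤ per A :=
      Finset.single_le_sum (f := fun x => x) (fun _ _ => Nat.zero_le _) hMb
    have hsub : A ⊆ Finset.range (per A + 1) := fun x hx => by
      have := A.le_max' x hx
      exact Finset.mem_range.mpr (by omega)
    calc vol A ≤ ∑ x ∈ Finset.range (per A + 1), x :=
          Finset.sum_le_sum_of_subset hsub
    _ = per A * (per A + 1) / 2 := by
        rw [Finset.sum_range_id, Nat.add_sub_cancel, Nat.mul_comm]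

lemma sqrt_two_vol_le (A : Finset ℕ) : Real.sqrt (2 * vol A) ≤ per A + 1 / 2 := by
  have h := vol_le_per A
  have he : 2 ∣ per A * (per A + 1) := (Nat.even_mul_succ_self _).two_dvd
  have h2 : 2 * vol A ≤ per A * (per A + 1) := by omega
  have h3 : Real.sqrt (2 * vol A) ≤ Real.sqrt (((per A : ℝ) + 1 / 2) ^ 2) := by
    apply Real.sqrt_le_sqrt
    have : (2 * vol A : ℝ) ≤ (per A : ℝ) * (per A + 1) := by exact_mod_cast h2
    push_cast at this ⊢
    nlinarith
  rwa [Real.sqrt_sq (by positivity)] at h3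

lemma n_le_fN (n : ℕ) : n ≤ fN n * (fN n + 1) / 2 := by
  have h1 : (0 : ℝ) ≤ 1 + 8 * n := by positivity
  have hs : Real.sqrt (1 + 8 * n) ^ 2 = 1 + 8 * n := Real.sq_sqrt h1
  have hs1 : (1 : ℝ) ≤ Real.sqrt (1 + 8 * n) := by
    nlinarith [hs, Real.sqrt_nonneg (1 + 8 * (n : ℝ))]
  have hr0 : 0 ≤ (-1 + Real.sqrt (1 + 8 * n)) / 2 := by linarith
  have hceil : (0 : ℤ) ≤ ⌈(-1 + Real.sqrt (1 + 8 * n)) / 2⌉ := Int.ceil_nonneg hr0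
  have hf : (-1 + Real.sqrt (1 + 8 * n)) / 2 ≤ (fN n : ℝ) := by
    rw [fN]
    rw [show ((⌈(-1 + Real.sqrt (1 + 8 * n)) / 2⌉.toNat : ℕ) : ℝ)
        = ((⌈(-1 + Real.sqrt (1 + 8 * n)) / 2⌉ : ℤ) : ℝ) by
      exact_mod_cast congrArg (Int.cast : ℤ → ℝ) (Int.toNat_of_nonneg hceil)]
    exact Int.le_ceil _
  have key : (2 * n : ℝ) ≤ (fN n : ℝ) * (fN n + 1) := by nlinarith
  have key' : 2 * n ≤ fN n * (fN n + 1) := by exact_mod_cast key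
  have he : 2 ∣ fN n * (fN n + 1) := (Nat.even_mul_succ_self _).two_dvd
  omega

theorem stmt15 (n m : ℕ) (hn : 1 ≤ n) (hm : fN n < m)
    (A : Finset ℕ) (hA : A ⊆ Finset.range m) (hv : vol A = m * (m + 1) / 2 - n) :
    Real.sqrt (2 * ((gN n : ℝ) + fN n + 1)) - 1 / 2 ≤ (per A : ℝ) ∧
    (fN n : ℝ) + Real.sqrt (2 * ((gN n : ℝ) + fN n + 1)) + 1 / 2 ≤ (m : ℝ) + per A := by
  have hnf : n ≤ fN n * (fN n + 1) / 2 := n_le_fN n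
  have hkey : gN n + fN n + 1 ≤ vol A := by
    rw [hv, gN]
    have he : 2 ∣ fN n * (fN n + 1) := (Nat.even_mul_succ_self _).two_dvd
    have hem : 2 ∣ m * (m + 1) := (Nat.even_mul_succ_self _).two_dvd
    have hmono : (fN n + 1) * (fN n + 2) ≤ m * (m + 1) :=
      Nat.mul_le_mul (by omega) (by omega)
    have h1 : (fN n + 1) * (fN n + 2) = fN n * (fN n + 1) + 2 * (fN n + 1) := by ring
    set a := fN n * (fN n + 1) with ha
    set b := m * (m + 1) with hb
    set c := (fN n + 1) * (fN n + 2) with hc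
    clear_value a b c
    omega
  have hcast : ((gN n : ℝ) + fN n + 1) ≤ (vol A : ℝ) := by
    have : ((gN n + fN n + 1 : ℕ) : ℝ) ≤ ((vol A : ℕ) : ℝ) := by exact_mod_cast hkey
    push_cast at this
    linarith
  have h2 : Real.sqrt (2 * ((gN n : ℝ) + fN n + 1)) ≤ Real.sqrt (2 * vol A) :=
    Real.sqrt_le_sqrt (by linarith)
  have h3 := sqrt_two_vol_le A
  have hmr : (fN n : ℝ) + 1 ≤ (m : ℝ) := by exact_mod_cast hm
  constructor
  · linarith
  · linarith
end

section
/- Let n ≥ 1 and m ≥ f(n) = ⌈(-1+√(1+8n))/2⌉. If A ⊆ {0,1,...,m−1} satisfies vol(A) = m(m+1)/2 − n and m−1 ∈ A, then per(Aᶜ) ≥ 2f(n) − 2, where Aᶜ = ℕ \ A. -/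
open Finset

lemma keylem (j e n : ℕ) (h1 : (j + 2 + e) * (j + 2 + e + 1) < 2 * n)
    (h2 : 2 * n ≤ j * (j + 1) + 2 * (j + 3 + 2 * e)) : False := by nlinarith

lemma fN_le (n k : ℕ) : fN n ≤ k ↔ 2 * n ≤ k * (k + 1) := by
  unfold fN
  rw [Int.toNat_le, Int.ceil_le, div_le_iff₀ (by norm_num : (0:ℝ) < 2)]
  push_cast
  constructor
  · intro h
    have h2 : (1:ℝ) + 8*n ≤ (2*k+1)^2 := by
      rw [show ((1:ℝ)+8*n) = Real.sqrt (1+8*n)^2 from by rw [Real.sq_sqrt]; positivity]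
      nlinarith [Real.sqrt_nonneg ((1:ℝ)+8*n)]
    have : (2*n : ℝ) ≤ k*(k+1) := by nlinarith
    exact_mod_cast this
  · intro h
    have h2 : Real.sqrt (1+8*n) ≤ Real.sqrt ((2*k+1)^2) := by
      apply Real.sqrt_le_sqrt
      have : (2*n:ℝ) ≤ k*(k+1) := by exact_mod_cast h
      nlinarith
    rw [Real.sqrt_sq (by positivity)] at h2
    linarith

theorem stmt16 (n m : ℕ) (hn : 1 ≤ n) (hm : fN n ≤ m)
    (A : Finset ℕ) (hA : A ⊆ Finset.range m) (hv : vol A = m * (m + 1) / 2 - n)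
    (hmem : m - 1 ∈ A) :
    2 * fN n - 2 ≤ sPer ((↑A : Set ℕ)ᶜ) := by
  by_cases hF1 : fN n ≤ 1
  · have h0 : 2 * fN n - 2 = 0 := by omega
    rw [h0]; exact Nat.zero_le _
  push_neg at hF1
  set F := fN n with hFdef
  have hm2 : 2 ≤ m := le_trans hF1 hm
  set B := Finset.range m \ A with hBdef
  have hmA : ∀ x ∈ A, x < m := fun x hx => Finset.mem_range.mp (hA hx)
  -- arithmetic: vol B = n - m, m ≤ n
  have e1 : (vol B + vol A) * 2 = m * (m - 1) := by
    unfold vol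
    rw [Finset.sum_sdiff hA]
    exact Finset.sum_range_id_mul_two m
  have e2 : m * (m + 1) / 2 * 2 = m * (m + 1) :=
    Nat.div_mul_cancel (Nat.even_mul_succ_self m).two_dvd
  have e3 : m * (m + 1) = m * (m - 1) + 2 * m := by
    have h : m - 1 + 2 = m + 1 := by omega
    rw [← h]; ring
  have hAv : m - 1 ≤ vol A :=
    Finset.single_le_sum (f := fun x => x) (fun i _ => Nat.zero_le i) hmem
  have hmn : m ≤ n := by omega
  have hvB : vol B = n - m := by omega
  -- boundary identification
  have hbd : sBdry ((↑A : Set ℕ)ᶜ) = ↑(bdry B ∪ {m}) := by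
    ext x
    simp only [sBdry, Set.mem_setOf_eq, Set.mem_compl_iff, Finset.mem_coe, not_not,
      Finset.coe_union, Set.mem_union, Finset.mem_union, Finset.mem_singleton,
      bdry, Finset.mem_filter, hBdef, Finset.mem_sdiff, Finset.mem_range, not_and, not_lt]
    constructor
    · rintro ⟨hxA, hcond⟩
      by_cases hxm : x = m
      · right; exact hxm
      left
      have hxlt : x < m := by
        rcases hcond with h0 | h1 | h2
        · omega
        · have := hmA _ h1; omega
        · have := hmA _ h2; omega
      refine ⟨⟨hxlt, hxA⟩, ?_⟩
      rcases hcond with h0 | h1 | h2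
      · exact Or.inl h0
      · exact Or.inr (Or.inl fun _ => h1)
      · exact Or.inr (Or.inr fun _ => h2)
    · rintro (⟨⟨hxlt, hxA⟩, hcond⟩ | hxm)
      · refine ⟨hxA, ?_⟩
        rcases hcond with h0 | h1 | h2
        · exact Or.inl h0
        · by_cases hx0 : x = 0
          · exact Or.inl hx0
          · exact Or.inr (Or.inl (h1 (by omega)))
        · have hne : x ≠ m - 1 := fun h => hxA (h ▸ hmem)
          exact Or.inr (Or.inr (h2 (by omega)))
      · subst hxm
        exact ⟨fun h => absurd (hmA x h) (by omega), Or.inr (Or.inl hmem)⟩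
  -- sPer computation
  have hmnb : m ∉ bdry B := by
    intro h
    have hmB : m ∈ B := (Finset.mem_filter.mp h).1
    rw [hBdef, Finset.mem_sdiff, Finset.mem_range] at hmB
    omega
  have hper : sPer ((↑A : Set ℕ)ᶜ) = per B + m := by
    unfold sPer
    rw [hbd, finsum_mem_coe_finset,
      Finset.sum_union (Finset.disjoint_singleton_right.mpr hmnb),
      Finset.sum_singleton]
    rfl
  -- per B ≥ fN (n - m)
  have hperB : fN (n - m) ≤ per B := by
    rcases Nat.eq_zero_or_pos (n - m) with h0 | hpos
    · rw [h0]
      have : fN 0 ≤ 0 := (fN_le 0 0).mpr (by norm_num)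
      omega
    · have hBne : B.Nonempty := by
        by_contra he
        rw [Finset.not_nonempty_iff_eq_empty] at he
        rw [he] at hvB
        simp [vol] at hvB
        omega
      set M := B.max' hBne with hMdef
      have hMB : M ∈ B := B.max'_mem hBne
      have hMbd : M ∈ bdry B := by
        simp only [bdry, Finset.mem_filter]
        exact ⟨hMB, Or.inr (Or.inr (fun hc => absurd (B.le_max' _ hc) (by omega)))⟩
      have h1 : M ≤ per B :=
        Finset.single_le_sum (f := fun x => x) (fun i _ => Nat.zero_le i) hMbd
      have h2 : vol B ≤ ∑ x ∈ Finset.range (M + 1), x :=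
        Finset.sum_le_sum_of_subset
          (fun x hx => Finset.mem_range.mpr (Nat.lt_succ_of_le (B.le_max' x hx)))
      have h3 : (∑ x ∈ Finset.range (M + 1), x) * 2 = (M + 1) * M :=
        Finset.sum_range_id_mul_two _
      have h4 : fN (n - m) ≤ M := by
        rw [fN_le]
        calc 2 * (n - m) = vol B * 2 := by rw [hvB]; ring
          _ ≤ (∑ x ∈ Finset.range (M + 1), x) * 2 := Nat.mul_le_mul_right 2 h2
          _ = (M + 1) * M := h3
          _ = M * (M + 1) := Nat.mul_comm _ _
      omega
  -- numeric facts about F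
  have hFn2 : (F - 1) * F < 2 * n := by
    by_contra h
    push_neg at h
    have h' : fN n ≤ F - 1 := by
      rw [fN_le]
      have he : F - 1 + 1 = F := by omega
      rw [he]; exact h
    omega
  rw [hper]
  by_cases hcase : 2 * F - 2 ≤ m
  · omega
  push_neg at hcase
  set k := 2 * F - 2 - m with hkdef
  have hk : k ≤ fN (n - m) := by
    by_contra h
    push_neg at h
    obtain ⟨j, hj⟩ : ∃ j, k = j + 1 := ⟨k - 1, by omega⟩
    have h4 := (fN_le (n - m) (k - 1)).mp (by omega)
    rw [hj] at h4
    simp only [Nat.add_sub_cancel] at h4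
    obtain ⟨F', hF'⟩ : ∃ F', F = F' + 1 := ⟨F - 1, by omega⟩
    have hFe : (F - 1) * F = F' * (F' + 1) := by rw [hF']; simp
    obtain ⟨e, he⟩ : ∃ e, m = j + 3 + 2 * e := by
      refine ⟨(m - (j + 3)) / 2, ?_⟩
      omega
    have hF'e : F' = j + 2 + e := by omega
    rw [hFe, hF'e] at hFn2
    have hsum : 2 * n ≤ j * (j + 1) + 2 * m := by
      have hc := Nat.sub_add_cancel hmn
      linarith [h4, hc]
    rw [he] at hsum
    exact keylem j e n hFn2 hsum
  omega
end

section
/- If A is a finite subset of ℕ with maximum element m, and A = {0,1,...,m} \ B for some B ⊆ {0,1,...,m−1}, then per(Aᶜ) = per(B) + (m+1), where Aᶜ = ℕ \ A. -/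
open Finset

theorem stmt17 (A B : Finset ℕ) (hA : A.Nonempty) (m : ℕ) (hm : m = A.max' hA)
    (hB : B ⊆ Finset.range m) (hAB : A = Finset.range (m + 1) \ B) :
    sPer ((↑A : Set ℕ)ᶜ) = per B + (m + 1) := by
  have hBlt : ∀ x, x ∈ B → x < m := fun x hx => Finset.mem_range.1 (hB hx)
  have hmem : ∀ x : ℕ, x ∈ ((↑A : Set ℕ)ᶜ) ↔ (x ∈ B ∨ m + 1 ≤ x) := by
    intro x
    simp only [Set.mem_compl_iff, Finset.coe_sdiff, hAB, Finset.mem_coe,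
      Finset.mem_sdiff, Set.mem_diff, Finset.mem_range]
    constructor
    · intro h
      by_cases hx : x ∈ B
      · exact Or.inl hx
      · right
        rcases Nat.lt_or_ge x (m + 1) with h' | h'
        · exact absurd ⟨h', hx⟩ h
        · exact h'
    · intro h hx
      rcases h with h | h
      · exact hx.2 h
      · exact absurd hx.1 (Nat.not_lt.2 h)
  have hset : sBdry ((↑A : Set ℕ)ᶜ) = ↑(bdry B ∪ {m + 1}) := by
    ext x
    simp only [sBdry, Set.mem_setOf_eq, hmem, bdry, Finset.coe_union,
      Set.mem_union, Finset.coe_filter, Set.mem_setOf_eq, Finset.coe_singleton,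
      Set.mem_singleton_iff]
    constructor
    · rintro ⟨h1, h2⟩
      rcases h1 with h1 | h1
      · left
        refine ⟨h1, ?_⟩
        have hxm := hBlt x h1
        rcases h2 with h2 | h2 | h2
        · exact Or.inl h2
        · right; left; intro hc; exact h2 (Or.inl hc)
        · right; right; intro hc; exact h2 (Or.inl hc)
      · right
        rcases h2 with h2 | h2 | h2
        · omega
        · by_contra hne
          have hx1 : m + 1 ≤ x - 1 := by omega
          exact h2 (Or.inr hx1)
        · exact absurd (Or.inr (by omega)) h2
    · rintro (⟨hxB, h2⟩ | rfl)
      · have hxm := hBlt x hxB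
        refine ⟨Or.inl hxB, ?_⟩
        rcases h2 with h2 | h2 | h2
        · exact Or.inl h2
        · right; left
          rintro (hc | hc)
          · exact h2 hc
          · omega
        · right; right
          rintro (hc | hc)
          · exact h2 hc
          · have := hBlt (x + 1)
            omega
      · refine ⟨Or.inr le_rfl, Or.inr (Or.inl ?_)⟩
        rintro (hc | hc)
        · have := hBlt (m + 1 - 1) hc; omega
        · omega
  have hdisj : Disjoint (bdry B) ({m + 1} : Finset ℕ) := by
    simp only [Finset.disjoint_singleton_right]
    intro hc
    have : m + 1 ∈ B := Finset.mem_filter.1 hc |>.1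
    have := hBlt _ this
    omega
  rw [sPer, hset, finsum_mem_coe_finset, Finset.sum_union hdisj, per,
    Finset.sum_singleton]
end
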